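/- Let m and n be positive integers and let Ψ be a random m×n real matrix whose rows are independent and whose entries within each row are 4-wise independent random variables, each uniformly distributed on {−1/√m, +1/√m}. Then for any fixed vectors u, v ∈ ℝⁿ, the variance of the sketched inner product satisfies Var(⟨Ψu, Ψv⟩) ≤ (2/m)·‖u‖₂²·‖v‖₂². -/

import Mathlib

/-!
Each row contributes `Y = (∑ⱼ ψⱼ uⱼ)(∑ₖ ψₖ vₖ) = ∑ⱼₖ uⱼ vₖ ψⱼ ψₖ`, with `ψⱼ² = a²`, `a = 1/√m`.
Since `∏_{i∈s} ψᵢ · ∏_{i∈t} ψᵢ = a^{2|s∩t|} ∏_{i∈s∆t} ψᵢ` and a product of at most four distinct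
centred `4`-wise independent entries has mean zero, the covariance of `ψⱼψₖ` and `ψₗψₚ` is `a⁴`
when `j ≠ k` and `{l, p} = {j, k}`, and `0` otherwise. Summing gives the exact row variance
`a⁴ (‖u‖²‖v‖² + ⟨u,v⟩² - 2 ∑ⱼ uⱼ² vⱼ²) ≤ 2 a⁴ ‖u‖²‖v‖²` (Cauchy–Schwarz). The `m` rows are
independent, so their variances add up to at most `m · 2/m² · ‖u‖²‖v‖²`.
-/

open scoped BigOperators
open Matrix MeasureTheory ProbabilityTheory

/-- The Euclidean (ℓ2) norm of a vector in ℝⁿ. -/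
noncomputable def l2norm {n : ℕ} (x : Fin n → ℝ) : ℝ := Real.sqrt (∑ i, x i ^ 2)

/-- The Euclidean inner product of two vectors. -/
def ip {n : ℕ} (x y : Fin n → ℝ) : ℝ := ∑ i, x i * y i

def KWiseIndepFun {Ω ι β : Type*} [MeasurableSpace Ω] [MeasurableSpace β] (k : ℕ)
    (X : ι → Ω → β) (μ : Measure Ω) : Prop :=
  ∀ s : Finset ι, s.card ≤ k → iIndepFun (fun i : s => X i) μ

lemma Finset.prod_mul_prod_eq_pow_mul_prod_symmDiff {ι M : Type*} [DecidableEq ι]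
    [CommMonoid M] {f : ι → M} {a : M} {s t : Finset ι} (hsq : ∀ i ∈ s ∩ t, f i ^ 2 = a ^ 2) :
    (∏ i ∈ s, f i) * ∏ i ∈ t, f i = a ^ (2 * (s ∩ t).card) * ∏ i ∈ symmDiff s t, f i := by
  rw [← Finset.prod_sdiff (Finset.inter_subset_left (s₁ := s) (s₂ := t)),
    ← Finset.prod_sdiff (Finset.inter_subset_right (s₁ := s) (s₂ := t)),
    Finset.sdiff_inter_self_left, Finset.sdiff_inter_self_right, Finset.symmDiff_def,
    Finset.prod_union disjoint_sdiff_sdiff, pow_mul, ← Finset.prod_const,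
    ← Finset.prod_congr rfl hsq]
  simp only [pow_two, Finset.prod_mul_distrib]
  rw [mul_mul_mul_comm, mul_comm]

lemma sum_mul_sum_eq_sum_prod {ι R : Type*} [Fintype ι] [CommSemiring R] (x u v : ι → R) :
    (∑ j, x j * u j) * (∑ j, x j * v j) = ∑ P : ι × ι, u P.1 * v P.2 * (x P.1 * x P.2) := by
  rw [Finset.sum_mul_sum, ← Finset.sum_product']
  exact Finset.sum_congr rfl fun P _ => by ring

section KWiseIndep

variable {Ω ι : Type*} [MeasurableSpace Ω] {μ : Measure Ω} {ψ : ι → Ω → ℝ} {a : ℝ} {r : ℕ}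

lemma memLp_mul_of_sq_eq [IsFiniteMeasure μ] (hmeas : ∀ i, Measurable (ψ i))
    (hsq : ∀ i, ∀ᵐ ω ∂μ, ψ i ω ^ 2 = a ^ 2) (j k : ι) (p : ENNReal) :
    MemLp (fun ω => ψ j ω * ψ k ω) p μ := by
  refine MemLp.of_bound ((hmeas j).mul (hmeas k)).aestronglyMeasurable (a ^ 2) ?_
  filter_upwards [hsq j, hsq k] with ω hj hk
  rw [Real.norm_eq_abs, abs_mul, (sq_eq_sq_iff_abs_eq_abs _ _).1 hj,
    (sq_eq_sq_iff_abs_eq_abs _ _).1 hk, abs_mul_abs_self, sq]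

lemma memLp_sum_mul_sum_of_sq_eq [IsFiniteMeasure μ] [Fintype ι] (hmeas : ∀ i, Measurable (ψ i))
    (hsq : ∀ i, ∀ᵐ ω ∂μ, ψ i ω ^ 2 = a ^ 2) (u v : ι → ℝ) (p : ENNReal) :
    MemLp (fun ω => (∑ j, ψ j ω * u j) * (∑ j, ψ j ω * v j)) p μ := by
  simp_rw [sum_mul_sum_eq_sum_prod]
  exact memLp_finsetSum _ fun (P : ι × ι) _ =>
    (memLp_mul_of_sq_eq hmeas hsq P.1 P.2 p).const_mul _

lemma KWiseIndepFun.integral_prod_eq_zero (hind : KWiseIndepFun r ψ μ)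
    (hmeas : ∀ i, Measurable (ψ i)) (hmean : ∀ i, μ[ψ i] = 0) {s : Finset ι}
    (hs : s.card ≤ r) (hne : s.Nonempty) : ∫ ω, ∏ i ∈ s, ψ i ω ∂μ = 0 := by
  obtain ⟨i, hi⟩ := hne
  simp_rw [← Finset.prod_coe_sort s]
  rw [(hind s hs).integral_fun_prod_eq_prod_integral fun i => (hmeas i).aestronglyMeasurable]
  exact Finset.prod_eq_zero (Finset.mem_univ ⟨i, hi⟩) (hmean i)

variable [IsProbabilityMeasure μ] [DecidableEq ι]

lemma KWiseIndepFun.integral_prod_mul_prod (hind : KWiseIndepFun r ψ μ)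
    (hmeas : ∀ i, Measurable (ψ i)) (hmean : ∀ i, μ[ψ i] = 0)
    (hsq : ∀ i, ∀ᵐ ω ∂μ, ψ i ω ^ 2 = a ^ 2) {s t : Finset ι} (hst : s.card + t.card ≤ r) :
    ∫ ω, (∏ i ∈ s, ψ i ω) * ∏ i ∈ t, ψ i ω ∂μ = if s = t then a ^ (2 * s.card) else 0 := by
  have hfactor : ∀ᵐ ω ∂μ, (∏ i ∈ s, ψ i ω) * ∏ i ∈ t, ψ i ω =
      a ^ (2 * (s ∩ t).card) * ∏ i ∈ symmDiff s t, ψ i ω := by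
    filter_upwards [(Filter.eventually_all_finset (s ∩ t)).2 fun i _ => hsq i] with ω hω
    exact Finset.prod_mul_prod_eq_pow_mul_prod_symmDiff hω
  rw [integral_congr_ae hfactor, integral_const_mul]
  split_ifs with h
  · simp [h]
  · have hcard : (symmDiff s t).card ≤ r :=
      (Finset.card_le_card Finset.symmDiff_subset_union).trans
        ((Finset.card_union_le s t).trans hst)
    rw [hind.integral_prod_eq_zero hmeas hmean hcard (Finset.symmDiff_nonempty.2 h), mul_zero]

lemma KWiseIndepFun.integral_mul (hind : KWiseIndepFun r ψ μ) (hr : 2 ≤ r)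
    (hmeas : ∀ i, Measurable (ψ i)) (hmean : ∀ i, μ[ψ i] = 0)
    (hsq : ∀ i, ∀ᵐ ω ∂μ, ψ i ω ^ 2 = a ^ 2) (j l : ι) :
    ∫ ω, ψ j ω * ψ l ω ∂μ = if j = l then a ^ 2 else 0 := by
  simpa using hind.integral_prod_mul_prod hmeas hmean hsq (s := {j}) (t := {l}) (by simpa)

lemma KWiseIndepFun.integral_mul_mul_mul (hind : KWiseIndepFun r ψ μ) (hr : 4 ≤ r)
    (hmeas : ∀ i, Measurable (ψ i)) (hmean : ∀ i, μ[ψ i] = 0)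
    (hsq : ∀ i, ∀ᵐ ω ∂μ, ψ i ω ^ 2 = a ^ 2) {j k l p : ι} (hjk : j ≠ k) (hlp : l ≠ p) :
    ∫ ω, (ψ j ω * ψ k ω) * (ψ l ω * ψ p ω) ∂μ =
      if j = l ∧ k = p ∨ j = p ∧ k = l then a ^ 4 else 0 := by
  have h := hind.integral_prod_mul_prod hmeas hmean hsq (s := {j, k}) (t := {l, p})
    (by rw [Finset.card_pair hjk, Finset.card_pair hlp]; omega)
  simpa only [Finset.prod_pair hjk, Finset.prod_pair hlp, Finset.card_pair hjk,
    ← Finset.coe_inj, Finset.coe_pair, Set.pair_eq_pair_iff] using h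

lemma KWiseIndepFun.covariance_mul_mul (hind : KWiseIndepFun r ψ μ) (hr : 4 ≤ r)
    (hmeas : ∀ i, Measurable (ψ i)) (hmean : ∀ i, μ[ψ i] = 0)
    (hsq : ∀ i, ∀ᵐ ω ∂μ, ψ i ω ^ 2 = a ^ 2) (j k l p : ι) :
    cov[fun ω => ψ j ω * ψ k ω, fun ω => ψ l ω * ψ p ω; μ] =
      if j ≠ k ∧ (j = l ∧ k = p ∨ j = p ∧ k = l) then a ^ 4 else 0 := by
  have h2 := hind.integral_mul (by omega) hmeas hmean hsq
  have hdiag : ∀ i (Y : Ω → ℝ), ∫ ω, ψ i ω * ψ i ω * Y ω ∂μ = a ^ 2 * ∫ ω, Y ω ∂μ := by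
    intro i Y
    rw [← integral_const_mul]
    refine integral_congr_ae ?_
    filter_upwards [hsq i] with ω hω
    rw [← hω, sq]
  rw [covariance_eq_sub (memLp_mul_of_sq_eq hmeas hsq j k 2) (memLp_mul_of_sq_eq hmeas hsq l p 2)]
  simp only [Pi.mul_apply, h2]
  by_cases hjk : j = k
  · subst hjk
    rw [hdiag, h2]
    simp
  by_cases hlp : l = p
  · subst hlp
    simp_rw [mul_comm (ψ j _ * ψ k _), hdiag, h2]
    have hjlk : ¬(j = l ∧ k = l) := fun h => hjk (h.1.trans h.2.symm)
    simp [hjk, hjlk]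
  rw [hind.integral_mul_mul_mul hr hmeas hmean hsq hjk hlp]
  simp [hjk, hlp]

lemma KWiseIndepFun.variance_sum_mul_sum [Fintype ι] (hind : KWiseIndepFun r ψ μ) (hr : 4 ≤ r)
    (hmeas : ∀ i, Measurable (ψ i)) (hmean : ∀ i, μ[ψ i] = 0)
    (hsq : ∀ i, ∀ᵐ ω ∂μ, ψ i ω ^ 2 = a ^ 2) (u v : ι → ℝ) :
    Var[fun ω => (∑ j, ψ j ω * u j) * (∑ j, ψ j ω * v j); μ] =
      a ^ 4 * ((∑ j, u j ^ 2) * (∑ j, v j ^ 2) + (∑ j, u j * v j) ^ 2 -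
        2 * ∑ j, u j ^ 2 * v j ^ 2) := by
  simp_rw [sum_mul_sum_eq_sum_prod]
  rw [variance_fun_sum' fun P _ => (memLp_mul_of_sq_eq hmeas hsq P.1 P.2 2).const_mul _]
  simp_rw [covariance_const_mul_left, covariance_const_mul_right,
    hind.covariance_mul_mul hr hmeas hmean hsq, Fintype.sum_prod_type]
  have hpair : ∀ j k : ι, (∑ l, ∑ p, u l * v p *
      (if j ≠ k ∧ (j = l ∧ k = p ∨ j = p ∧ k = l) then a ^ 4 else 0)) =
      if j = k then 0 else a ^ 4 * (u j * v k + u k * v j) := by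
    intro j k
    by_cases hjk : j = k
    · simp [hjk]
    have hsplit : ∀ l p, (if j ≠ k ∧ (j = l ∧ k = p ∨ j = p ∧ k = l) then a ^ 4 else 0) =
        (if l = j then if p = k then a ^ 4 else 0 else 0) +
          (if l = k then if p = j then a ^ 4 else 0 else 0) := by
      intro l p
      split_ifs <;> grind
    simp only [hsplit, mul_add, mul_ite, mul_zero, Finset.sum_add_distrib]
    simp [hjk]
    ring
  have hoff : ∀ j k : ι, u j * v k * (if j = k then 0 else a ^ 4 * (u j * v k + u k * v j)) =
      a ^ 4 * (u j ^ 2 * v k ^ 2 + (u j * v j) * (u k * v k)) -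
        if j = k then a ^ 4 * (2 * (u j ^ 2 * v j ^ 2)) else 0 := by
    intro j k
    split_ifs with h
    · subst h; ring
    · ring
  simp only [← Finset.mul_sum, hpair, hoff, Finset.sum_sub_distrib, Finset.sum_ite_eq,
    Finset.mem_univ, if_true, Finset.sum_add_distrib, ← Finset.sum_mul]
  ring

lemma KWiseIndepFun.variance_sum_mul_sum_le [Fintype ι] (hind : KWiseIndepFun r ψ μ)
    (hr : 4 ≤ r) (hmeas : ∀ i, Measurable (ψ i)) (hmean : ∀ i, μ[ψ i] = 0)
    (hsq : ∀ i, ∀ᵐ ω ∂μ, ψ i ω ^ 2 = a ^ 2) (u v : ι → ℝ) :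
    Var[fun ω => (∑ j, ψ j ω * u j) * (∑ j, ψ j ω * v j); μ] ≤
      2 * a ^ 4 * (∑ j, u j ^ 2) * (∑ j, v j ^ 2) := by
  have hcs := Finset.sum_mul_sq_le_sq_mul_sq Finset.univ u v
  have hdiag : 0 ≤ ∑ j, u j ^ 2 * v j ^ 2 := by positivity
  calc _ = a ^ 4 * ((∑ j, u j ^ 2) * (∑ j, v j ^ 2) + (∑ j, u j * v j) ^ 2 -
        2 * ∑ j, u j ^ 2 * v j ^ 2) := hind.variance_sum_mul_sum hr hmeas hmean hsq u v
    _ ≤ a ^ 4 * (2 * ((∑ j, u j ^ 2) * (∑ j, v j ^ 2))) := by gcongr; linarith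
    _ = _ := by ring

end KWiseIndep

section TwoPoint

variable {Ω : Type*} [MeasurableSpace Ω] {μ : Measure Ω} [IsProbabilityMeasure μ]
  {X : Ω → ℝ} {a : ℝ}

lemma ae_eq_or_eq_neg_of_measure_eq_half (hX : Measurable X) (ha : a ≠ 0)
    (h₁ : μ {ω | X ω = a} = 1 / 2) (h₂ : μ {ω | X ω = -a} = 1 / 2) :
    ∀ᵐ ω ∂μ, X ω = a ∨ X ω = -a := by
  have hdisj : Disjoint {ω | X ω = a} {ω | X ω = -a} :=
    Set.disjoint_left.2 fun ω h h' => ha (by linarith [h.symm.trans h'])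
  have hA : MeasurableSet {ω | X ω = a} := hX (measurableSet_singleton a)
  have hB : MeasurableSet {ω | X ω = -a} := hX (measurableSet_singleton (-a))
  rw [ae_iff_measure_eq (p := fun ω => X ω = a ∨ X ω = -a) (hA.union hB).nullMeasurableSet,
    Set.ofPred_or, measure_union hdisj hB, h₁, h₂, ENNReal.add_halves, measure_univ]

lemma integral_eq_zero_of_measure_eq_half (hX : Measurable X) (ha : a ≠ 0)
    (h₁ : μ {ω | X ω = a} = 1 / 2) (h₂ : μ {ω | X ω = -a} = 1 / 2) : μ[X] = 0 := by
  have hA : MeasurableSet {ω | X ω = a} := hX (measurableSet_singleton a)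
  have hX' : X =ᵐ[μ] fun ω => a * (2 * {ω | X ω = a}.indicator 1 ω - 1) := by
    filter_upwards [ae_eq_or_eq_neg_of_measure_eq_half hX ha h₁ h₂] with ω hω
    rcases hω with h | h
    · simp [h]; ring
    · have : ω ∉ {ω | X ω = a} := fun h' => ha (by linarith [h.symm.trans h'])
      simp [Set.indicator_of_notMem this, h]
  rw [integral_congr_ae hX', integral_const_mul, integral_sub, integral_const_mul,
    integral_indicator_one hA, measureReal_def, h₁]
  · simp
  · exact ((integrable_const 1).indicator hA).const_mul 2
  · exact integrable_const 1

lemma ae_sq_eq_of_measure_eq_half (hX : Measurable X) (ha : a ≠ 0)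
    (h₁ : μ {ω | X ω = a} = 1 / 2) (h₂ : μ {ω | X ω = -a} = 1 / 2) :
    ∀ᵐ ω ∂μ, X ω ^ 2 = a ^ 2 :=
  (ae_eq_or_eq_neg_of_measure_eq_half hX ha h₁ h₂).mono fun _ => sq_eq_sq_iff_eq_or_eq_neg.2

end TwoPoint

lemma l2norm_sq {n : ℕ} (x : Fin n → ℝ) : l2norm x ^ 2 = ∑ i, x i ^ 2 :=
  Real.sq_sqrt (by positivity)

lemma natCast_mul_one_div_sqrt_pow_four (m : ℕ) : (m : ℝ) * (1 / Real.sqrt m) ^ 4 = 1 / m := by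
  rw [div_pow, one_pow, show 4 = 2 * 2 by rfl, pow_mul, Real.sq_sqrt (Nat.cast_nonneg m), sq,
    mul_one_div, div_self_mul_self', one_div]

theorem stmt_10_general (m n : ℕ)
    (Ω : Type*) [MeasurableSpace Ω] (μ : Measure Ω) [IsProbabilityMeasure μ]
    (Ψ : Ω → Matrix (Fin m) (Fin n) ℝ)
    (hmeas : ∀ (i : Fin m) (j : Fin n), Measurable fun ω => Ψ ω i j)
    -- the rows of `Ψ` are independent
    (hrows : iIndepFun
      (fun i : Fin m => fun ω => (fun j => Ψ ω i j)) μ)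
    -- within each row, the entries are 4-wise independent
    (h4wise : ∀ (i : Fin m) (s : Finset (Fin n)), s.card ≤ 4 →
      iIndepFun
        (fun j : {j // j ∈ s} => fun ω => Ψ ω i j.1) μ)
    -- each entry is uniformly distributed on `{−1/√m, +1/√m}`
    (hunif : ∀ (i : Fin m) (j : Fin n),
      μ {ω | Ψ ω i j = 1 / Real.sqrt m} = 1 / 2 ∧
      μ {ω | Ψ ω i j = -(1 / Real.sqrt m)} = 1 / 2)
    (u v : Fin n → ℝ) :
    variance (fun ω => ip ((Ψ ω).mulVec u) ((Ψ ω).mulVec v)) μ ≤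
      2 / m * l2norm u ^ 2 * l2norm v ^ 2 := by
  have hind : ∀ i, KWiseIndepFun 4 (fun j ω => Ψ ω i j) μ := h4wise
  have ha : ∀ i : Fin m, 1 / Real.sqrt m ≠ 0 := fun i => by
    have : (0 : ℝ) < m := by exact_mod_cast i.pos
    positivity
  have hmean : ∀ i j, ∫ ω, Ψ ω i j ∂μ = 0 := fun i j =>
    integral_eq_zero_of_measure_eq_half (hmeas i j) (ha i) (hunif i j).1 (hunif i j).2
  have hsq : ∀ i j, ∀ᵐ ω ∂μ, Ψ ω i j ^ 2 = (1 / Real.sqrt m) ^ 2 := fun i j =>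
    ae_sq_eq_of_measure_eq_half (hmeas i j) (ha i) (hunif i j).1 (hunif i j).2
  let g : (Fin n → ℝ) → ℝ := fun x => (∑ j, x j * u j) * (∑ j, x j * v j)
  have hsum : (fun ω => ip ((Ψ ω).mulVec u) ((Ψ ω).mulVec v)) =
      ∑ i, fun ω => g fun j => Ψ ω i j := by
    funext ω
    simp [ip, g, Matrix.mulVec, dotProduct]
  rw [hsum, IndepFun.variance_sum
    (fun i _ => memLp_sum_mul_sum_of_sq_eq (hmeas i) (hsq i) u v 2)
    (fun i _ j _ hij => (hrows.comp (fun _ => g) fun _ => by fun_prop).indepFun hij)]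
  calc ∑ i, Var[fun ω => g fun j => Ψ ω i j; μ]
      ≤ ∑ _i : Fin m, 2 * (1 / Real.sqrt m) ^ 4 * (∑ j, u j ^ 2) * (∑ j, v j ^ 2) :=
        Finset.sum_le_sum fun i _ =>
          (hind i).variance_sum_mul_sum_le le_rfl (hmeas i) (hmean i) (hsq i) u v
    _ = 2 / m * l2norm u ^ 2 * l2norm v ^ 2 := by
      rw [Finset.sum_const, Finset.card_univ, Fintype.card_fin, nsmul_eq_mul, l2norm_sq,
        l2norm_sq]
      linear_combination (2 * (∑ j, u j ^ 2) * (∑ j, v j ^ 2)) *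
        natCast_mul_one_div_sqrt_pow_four m

/-- Variance bound for the AMS sketch: if the rows of the random `m × n` matrix `Ψ` are
independent, the entries within each row are 4-wise independent, and each entry is uniform
on `{−1/√m, +1/√m}`, then `Var(⟨Ψu, Ψv⟩) ≤ (2/m)·‖u‖₂²·‖v‖₂²`. -/
theorem stmt_10 (m n : ℕ) (hm : 0 < m) (hn : 0 < n)
    (Ω : Type*) [MeasurableSpace Ω] (μ : Measure Ω) [IsProbabilityMeasure μ]
    (Ψ : Ω → Matrix (Fin m) (Fin n) ℝ)
    (hmeas : ∀ (i : Fin m) (j : Fin n), Measurable fun ω => Ψ ω i j)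
    -- the rows of `Ψ` are independent
    (hrows : iIndepFun
      (fun i : Fin m => fun ω => (fun j => Ψ ω i j)) μ)
    -- within each row, the entries are 4-wise independent
    (h4wise : ∀ (i : Fin m) (s : Finset (Fin n)), s.card ≤ 4 →
      iIndepFun
        (fun j : {j // j ∈ s} => fun ω => Ψ ω i j.1) μ)
    -- each entry is uniformly distributed on `{−1/√m, +1/√m}`
    (hunif : ∀ (i : Fin m) (j : Fin n),
      μ {ω | Ψ ω i j = 1 / Real.sqrt m} = 1 / 2 ∧
      μ {ω | Ψ ω i j = -(1 / Real.sqrt m)} = 1 / 2)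
    (u v : Fin n → ℝ) :
    variance (fun ω => ip ((Ψ ω).mulVec u) ((Ψ ω).mulVec v)) μ ≤
      2 / m * l2norm u ^ 2 * l2norm v ^ 2 :=
  stmt_10_general m n Ω μ Ψ hmeas hrows h4wise hunif u v
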